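/- arXiv:2212.03949 — 4 statements merged into one kernel-verified Lean document; each statement's English description precedes it below -/
import Mathlib

section
/- Let P be a finite bounded poset with a generalized recursive atom ordering Σ. Then for any u < v in P and any root r for [u,v], the restriction of Σ to the rooted interval [u,v]_r is a generalized recursive atom ordering of the finite bounded poset [u,v]. -/
/-- `l` is a saturated chain from `x` to `y` in the poset `α`:
a list `x = x₀ ⋖ x₁ ⋖ ⋯ ⋖ x_k = y` of elements, each covered by the next. -/
def SatChain {α : Type*} [PartialOrder α] (x y : α) (l : List α) : Prop :=
  l.Chain' (· ⋖ ·) ∧ l.head? = some x ∧ l.getLast? = some y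

/-- A chain-atom ordering of a bounded poset `α`: for each `u : α` and each root `r`
(a saturated chain from `⊥` to `u`, recorded as a list ending in `u`), a strict linear
order on the atoms of the rooted interval `[u, ⊤]_r`, i.e. on the elements covering `u`.
The relation is recorded for all pairs `(u, r)`; only genuine roots are relevant. -/
structure ChainAtomOrdering (α : Type*) [PartialOrder α] where
  lt : α → List α → α → α → Prop
  irrefl : ∀ u r a, ¬ lt u r a a
  trans : ∀ u r a b c, lt u r a b → lt u r b c → lt u r a c
  total : ∀ u r a b, u ⋖ a → u ⋖ b → a ≠ b → lt u r a b ∨ lt u r b a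

/-- `a` is the first atom of the rooted interval `[u,v]_r` in the chain-atom ordering `S`. -/
def ChainAtomOrdering.IsFirstAtom {α : Type*} [PartialOrder α] (S : ChainAtomOrdering α)
    (u v : α) (r : List α) (a : α) : Prop :=
  u ⋖ a ∧ a ≤ v ∧ ∀ b, u ⋖ b → b ≤ v → b ≠ a → S.lt u r a b

/-- `IsGRAO S u v r`: the restriction of the chain-atom ordering `S` to the rooted
interval `[u,v]_r` is a generalized recursive atom ordering (GRAO) of `[u,v]`.
Either `[u,v]` has length 1, or: (i)(a) for each atom `a` of `[u,v]_r` the restriction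
to `[a,v]_{r·a}` is a GRAO; (i)(b) for each atom `a` and each `a ⋖ x ⋖ w ≤ v`, either
the first atom of `[a,w]_{r·a}` lies above some atom of `[u,v]_r` earlier than `a`, or
no atom of `[a,w]_{r·a}` does; (ii) if atoms `ai, aj` of `[u,v]_r` with `ai` earlier
than `aj` lie below a common `y ≤ v`, then some `z` with `aj ⋖ z ≤ y` lies above an
atom of `[u,v]_r` earlier than `aj`. -/
inductive IsGRAO {α : Type*} [PartialOrder α] (S : ChainAtomOrdering α) :
    α → α → List α → Prop
  | base (u v : α) (r : List α) (h : u ⋖ v) : IsGRAO S u v r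
  | step (u v : α) (r : List α)
      (ia : ∀ a, u ⋖ a → a ≤ v → IsGRAO S a v (r ++ [a]))
      (ib : ∀ a x w, u ⋖ a → a ≤ v → a ⋖ x → x ⋖ w → w ≤ v →
        (∃ b, S.IsFirstAtom a w (r ++ [a]) b ∧
          ∃ a', u ⋖ a' ∧ a' ≤ v ∧ S.lt u r a' a ∧ a' < b) ∨
        (∀ b a', a ⋖ b → b ≤ w → u ⋖ a' → a' ≤ v → S.lt u r a' a → ¬ a' < b))
      (ii : ∀ ai aj y, u ⋖ ai → ai ≤ v → u ⋖ aj → aj ≤ v → S.lt u r ai aj →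
        ai < y → aj < y → y ≤ v →
        ∃ ak z, u ⋖ ak ∧ ak ≤ v ∧ S.lt u r ak aj ∧ aj ⋖ z ∧ z ≤ y ∧ ak < z) :
      IsGRAO S u v r

/-- `IsRAO S u v r`: the restriction of the chain-atom ordering `S` to the rooted
interval `[u,v]_r` is a recursive atom ordering (RAO) of `[u,v]`.  It differs from a
GRAO only in condition (i)(b): for each atom `a` of `[u,v]_r`, every atom of
`[a,v]_{r·a}` lying above some atom of `[u,v]_r` earlier than `a` must precede every
atom of `[a,v]_{r·a}` lying above no such atom. -/
inductive IsRAO {α : Type*} [PartialOrder α] (S : ChainAtomOrdering α) :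
    α → α → List α → Prop
  | base (u v : α) (r : List α) (h : u ⋖ v) : IsRAO S u v r
  | step (u v : α) (r : List α)
      (ia : ∀ a, u ⋖ a → a ≤ v → IsRAO S a v (r ++ [a]))
      (ib : ∀ a b c, u ⋖ a → a ≤ v → a ⋖ b → b ≤ v → a ⋖ c → c ≤ v →
        (∃ a', u ⋖ a' ∧ a' ≤ v ∧ S.lt u r a' a ∧ a' < b) →
        (∀ a', u ⋖ a' → a' ≤ v → S.lt u r a' a → ¬ a' < c) →
        S.lt a (r ++ [a]) b c)
      (ii : ∀ ai aj y, u ⋖ ai → ai ≤ v → u ⋖ aj → aj ≤ v → S.lt u r ai aj →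
        ai < y → aj < y → y ≤ v →
        ∃ ak z, u ⋖ ak ∧ ak ≤ v ∧ S.lt u r ak aj ∧ aj ⋖ z ∧ z ≤ y ∧ ak < z) :
      IsRAO S u v r

/-!
A GRAO condition on `[u, v]_r` only involves atoms of `[u, v]` and elements below `v`, so it
survives lowering the top `v`; and clause (i)(a) hands it down from `[x, ⊤]` to `[y, ⊤]` for
each cover `x ⋖ y`. Walking up the root `⊥ ⋖ ⋯ ⋖ u` gives a GRAO of `[u, ⊤]_r`, and lowering
the top to `v` finishes. An interval `[u, u]` has no atoms, so all three clauses hold vacuously.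
-/

namespace IsGRAO

variable {α : Type*} [PartialOrder α] {S : ChainAtomOrdering α}

theorem self (S : ChainAtomOrdering α) (u : α) (r : List α) : IsGRAO S u u r :=
  step u u r (fun _ ha hau => absurd (ha.lt.trans_le hau) (lt_irrefl u))
    (fun _ _ _ ha hau _ _ _ => absurd (ha.lt.trans_le hau) (lt_irrefl u))
    (fun _ _ _ ha hau _ _ _ _ _ _ => absurd (ha.lt.trans_le hau) (lt_irrefl u))

theorem of_covBy {u v a : α} {r : List α} (h : IsGRAO S u v r) (ha : u ⋖ a) (hav : a ≤ v) :
    IsGRAO S a v (r ++ [a]) := by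
  cases h with
  | base _ _ _ huv =>
    obtain rfl : a = v := hav.lt_or_eq.resolve_left (huv.2 ha.lt)
    exact self S a _
  | step _ _ _ ia _ _ => exact ia a ha hav

theorem of_le {u w v : α} {r : List α} (h : IsGRAO S u w r) (hvw : v ≤ w) :
    IsGRAO S u v r := by
  induction h generalizing v with
  | base u w r huw =>
    rcases hvw.eq_or_lt with rfl | hvw
    · exact base u v r huw
    · have no_atom : ∀ a, u ⋖ a → ¬ a ≤ v := fun a ha hav => huw.2 (ha.lt.trans_le hav) hvw
      exact step u v r (fun a ha hav => (no_atom a ha hav).elim)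
        (fun a _ _ ha hav _ _ _ => (no_atom a ha hav).elim)
        (fun a _ _ ha hav _ _ _ _ _ _ => (no_atom a ha hav).elim)
  | step u w r _ ib ii ih =>
    refine step u v r (fun a ha hav => ih a ha (hav.trans hvw) hvw) ?_ ?_
    · intro a x w' ha hav hax hxw' hw'v
      rcases ib a x w' ha (hav.trans hvw) hax hxw' (hw'v.trans hvw) with
        ⟨b, hb, a', ha', -, hlt, ha'b⟩ | hnone
      · exact .inl ⟨b, hb, a', ha', (ha'b.le.trans hb.2.1).trans hw'v, hlt, ha'b⟩
      · exact .inr fun b a' hab hbw' ha' ha'v hlt => hnone b a' hab hbw' ha' (ha'v.trans hvw) hlt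
    · intro ai aj y hai haiv haj hajv hlt hiy hjy hyv
      obtain ⟨ak, z, hak, -, hkj, hjz, hzy, hkz⟩ :=
        ii ai aj y hai (haiv.trans hvw) haj (hajv.trans hvw) hlt hiy hjy (hyv.trans hvw)
      exact ⟨ak, z, hak, (hkz.le.trans hzy).trans hyv, hkj, hjz, hzy, hkz⟩

theorem of_satChain [OrderTop α] {x u : α} {r l : List α} (h : IsGRAO S x ⊤ r)
    (hl : SatChain x u l) : IsGRAO S u ⊤ (r ++ l.tail) := by
  obtain ⟨hchain, hhead, hlast⟩ := hl
  induction l generalizing x r with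
  | nil => simp at hhead
  | cons y l ih =>
    obtain rfl : x = y := by simpa using hhead.symm
    cases l with
    | nil =>
      obtain rfl : x = u := by simpa using hlast
      simpa using h
    | cons z l =>
      have hxz : x ⋖ z := (List.isChain_cons_cons.mp hchain).1
      simpa using ih (h.of_covBy hxz le_top) (List.isChain_cons_cons.mp hchain).2 rfl
        (by simpa using hlast)

end IsGRAO

theorem stmt_3_general {α : Type*} [PartialOrder α] [BoundedOrder α]
    (S : ChainAtomOrdering α) (h : IsGRAO S ⊥ ⊤ [⊥])
    (u v : α) (r : List α) (hr : SatChain (⊥ : α) u r) :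
    IsGRAO S u v r := by
  have hroot : [⊥] ++ r.tail = r := List.cons_head?_tail hr.2.1
  have htop : IsGRAO S u ⊤ r := hroot ▸ h.of_satChain hr
  exact htop.of_le le_top

/-- A generalized recursive atom ordering of a finite bounded poset restricts to a
generalized recursive atom ordering of every rooted interval `[u,v]_r`. -/
theorem stmt_3 {α : Type*} [PartialOrder α] [BoundedOrder α] [Fintype α]
    (S : ChainAtomOrdering α) (h : IsGRAO S ⊥ ⊤ [⊥])
    (u v : α) (huv : u < v) (r : List α) (hr : SatChain (⊥ : α) u r) :
    IsGRAO S u v r :=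
  stmt_3_general S h u v r hr
end

section
/- Let P be a finite bounded poset with a generalized recursive atom ordering Σ. Consider t, u, v ∈ P with t ⋖ u < v and a root r for [t,v] (a saturated chain from 0̂ to t). Then either the Σ-first atom of [u,v]_{r·u} (where r·u is r extended by the cover t ⋖ u) is greater than some atom of [t,v]_r that comes earlier than u in the Σ-order, or u is the Σ-first atom of [t,v]_r. -/
section

variable {α : Type*} [PartialOrder α]

theorem CovBy.lt_of_covBy_of_ne {u a b v : α} (ha : u ⋖ a) (hb : u ⋖ b) (hav : a ≤ v)
    (hbv : b ≤ v) (hab : a ≠ b) : a < v := by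
  refine hav.lt_of_ne ?_
  rintro rfl
  exact ha.2 hb.lt (hbv.lt_of_ne hab.symm)

namespace ChainAtomOrdering

variable (S : ChainAtomOrdering α)

def LiesAboveEarlierAtom (t : α) (r : List α) (u a : α) : Prop :=
  ∃ u', t ⋖ u' ∧ S.lt t r u' u ∧ u' < a

theorem wellFounded_lt [Finite α] (u : α) (r : List α) : WellFounded (S.lt u r) :=
  @Finite.wellFounded_of_trans_of_irrefl _ _ _ ⟨S.trans u r⟩ ⟨S.irrefl u r⟩

theorem exists_isFirstAtom [Finite α] {u v : α} (huv : u < v) (r : List α) :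
    ∃ b, S.IsFirstAtom u v r b := by
  obtain ⟨b, ⟨hub, hbv⟩, hmin⟩ :=
    (S.wellFounded_lt u r).has_min {a | u ⋖ a ∧ a ≤ v} (exists_covBy_le_of_lt huv)
  exact ⟨b, hub, hbv, fun c huc hcv hcb =>
    (S.total u r b c hub huc (Ne.symm hcb)).resolve_right (hmin c ⟨huc, hcv⟩)⟩

theorem exists_lt_of_not_isFirstAtom {t u v : α} {r : List α} (htu : t ⋖ u) (huv : u ≤ v)
    (h : ¬ S.IsFirstAtom t v r u) : ∃ u₀, t ⋖ u₀ ∧ u₀ ≤ v ∧ S.lt t r u₀ u := by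
  contrapose! h
  exact ⟨htu, huv, fun b htb hbv hbu =>
    (S.total t r u b htu htb (Ne.symm hbu)).resolve_right (h b htb hbv)⟩

variable {S}

theorem IsFirstAtom.lt_of_lt {u v c e z : α} {r : List α} (hc : S.IsFirstAtom u v r c)
    (hue : u ⋖ e) (hev : e ≤ v) (hez : S.lt u r e z) : S.lt u r c z := by
  by_cases hec : e = c
  · exact hec ▸ hez
  · exact S.trans u r c e z (hc.2.2 e hue hev hec) hez

end ChainAtomOrdering

namespace IsGRAO

variable {S : ChainAtomOrdering α} {t u v w : α} {r : List α}

theorem of_satChain_s8 {x : α} (h : IsGRAO S x v [x]) (hr : SatChain x t r) (htv : t < v) :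
    IsGRAO S t v r := by
  induction r using List.reverseRecOn generalizing t with
  | nil => simp [SatChain] at hr
  | append_singleton l s ih =>
    obtain ⟨hch, hhead, hlast⟩ := hr
    obtain rfl : s = t := by simpa using hlast
    rcases l.eq_nil_or_concat' with rfl | ⟨l', s', rfl⟩
    · obtain rfl : s = x := by simpa using hhead
      simpa using h
    · have hs's : s' ⋖ s := by
        simp only [List.append_assoc, List.singleton_append] at hch
        exact (List.isChain_append_cons_cons.mp hch).2.1
      have hG := ih ⟨hch.left_of_append, by simpa using hhead, by simp⟩ (hs's.lt.trans htv)
      cases hG with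
      | base _ _ _ hs'v => exact (hs'v.2 hs's.lt htv).elim
      | step _ _ _ ia _ _ => exact ia s hs's htv.le

theorem exists_covBy_liesAboveEarlierAtom {u₀ : α} (hG : IsGRAO S t w r) (htu : t ⋖ u)
    (huv : u < v) (hvw : v ≤ w) (htu₀ : t ⋖ u₀) (hu₀v : u₀ ≤ v)
    (hu₀u : S.lt t r u₀ u) :
    ∃ z, u ⋖ z ∧ z ≤ v ∧ S.LiesAboveEarlierAtom t r u z := by
  cases hG with
  | base _ _ _ htw => exact (htw.2 htu.lt (huv.trans_le hvw)).elim
  | step _ _ _ _ _ ii =>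
    have hu₀v' : u₀ < v := hu₀v.lt_of_ne (by rintro rfl; exact htu₀.2 htu.lt huv)
    obtain ⟨a, z, hta, -, hau, huz, hzv, haz⟩ :=
      ii u₀ u v htu₀ (hu₀v.trans hvw) htu (huv.le.trans hvw) hu₀u hu₀v' huv hvw
    exact ⟨z, huz, hzv, a, hta, hau, haz⟩

theorem exists_liesAboveEarlierAtom_lt {b z : α} (hG : IsGRAO S t w r) (htu : t ⋖ u)
    (hvw : v ≤ w) (hb : S.IsFirstAtom u v (r ++ [u]) b) (huz : u ⋖ z) (hzv : z ≤ v)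
    (hz : S.LiesAboveEarlierAtom t r u z) (hbz : b ≠ z) :
    ∃ c, u ⋖ c ∧ c ≤ v ∧ S.LiesAboveEarlierAtom t r u c ∧ S.lt u (r ++ [u]) c z := by
  obtain ⟨hub, hbv, hbfirst⟩ := hb
  have hbv' : b < v := hub.lt_of_covBy_of_ne huz hbv hzv hbz
  have hzv' : z < v := huz.lt_of_covBy_of_ne hub hzv hbv (Ne.symm hbz)
  have huw : u < w := hub.lt.trans (hbv'.trans_le hvw)
  cases hG with
  | base _ _ _ htw => exact (htw.2 htu.lt huw).elim
  | step _ _ _ ia ib _ =>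
    cases ia u htu huw.le with
    | base _ _ _ huw' => exact (huw'.2 hub.lt (hbv'.trans_le hvw)).elim
    | step _ _ _ _ _ ii =>
      obtain ⟨e, z', hue, -, hez, hzz', hz'v, hez'⟩ :=
        ii b z v hub (hbv.trans hvw) huz (hzv.trans hvw) (hbfirst z huz hzv (Ne.symm hbz))
          hbv' hzv' hvw
      rcases ib u z z' htu huw.le huz hzz' (hz'v.trans hvw) with
        ⟨c, hc, a, hta, -, hau, hac⟩ | hnone
      · exact ⟨c, hc.1, hc.2.1.trans hz'v, ⟨a, hta, hau, hac⟩, hc.lt_of_lt hue hez'.le hez⟩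
      · obtain ⟨a, hta, hau, haz⟩ := hz
        exact (hnone z a huz hzz'.le hta (haz.le.trans (hzv.trans hvw)) hau haz).elim

theorem firstAtom_liesAboveEarlierAtom_or_isFirstAtom [Finite α] (hG : IsGRAO S t w r)
    (htu : t ⋖ u) (huv : u < v) (hvw : v ≤ w) :
    (∃ b, S.IsFirstAtom u v (r ++ [u]) b ∧
      ∃ u', t ⋖ u' ∧ u' ≤ v ∧ S.lt t r u' u ∧ u' < b) ∨
    S.IsFirstAtom t v r u := by
  refine or_iff_not_imp_right.2 fun hu => ?_
  obtain ⟨u₀, htu₀, hu₀v, hu₀u⟩ := S.exists_lt_of_not_isFirstAtom htu huv.le hu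
  obtain ⟨z₀, ⟨huz₀, hz₀v, hz₀⟩, hmin⟩ :=
    (S.wellFounded_lt u (r ++ [u])).has_min
      {z | u ⋖ z ∧ z ≤ v ∧ S.LiesAboveEarlierAtom t r u z}
      (hG.exists_covBy_liesAboveEarlierAtom htu huv hvw htu₀ hu₀v hu₀u)
  obtain ⟨b, hb⟩ := S.exists_isFirstAtom huv (r ++ [u])
  obtain rfl : b = z₀ := by
    by_contra hbz
    obtain ⟨c, huc, hcv, hc, hcz⟩ :=
      hG.exists_liesAboveEarlierAtom_lt htu hvw hb huz₀ hz₀v hz₀ hbz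
    exact hmin c ⟨huc, hcv, hc⟩ hcz
  obtain ⟨u', htu', hu'u, hu'b⟩ := hz₀
  exact ⟨b, hb, u', htu', hu'b.le.trans hb.2.1, hu'u, hu'b⟩

end IsGRAO

end

/-- For a GRAO `S` of a finite bounded poset: given `t ⋖ u < v` and a root `r` for
`[t,v]`, either the `S`-first atom of `[u,v]_{r·u}` is greater than some atom of
`[t,v]_r` earlier than `u`, or `u` is the `S`-first atom of `[t,v]_r`. -/
theorem stmt_8 {α : Type*} [PartialOrder α] [BoundedOrder α] [Fintype α]
    (S : ChainAtomOrdering α) (h : IsGRAO S ⊥ ⊤ [⊥])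
    (t u v : α) (htu : t ⋖ u) (huv : u < v)
    (r : List α) (hr : SatChain (⊥ : α) t r) :
    (∃ b, S.IsFirstAtom u v (r ++ [u]) b ∧
      ∃ u', t ⋖ u' ∧ u' ≤ v ∧ S.lt t r u' u ∧ u' < b) ∨
    S.IsFirstAtom t v r u := by
  have hG : IsGRAO S t ⊤ r := h.of_satChain_s8 hr (htu.lt.trans (huv.trans_le le_top))
  exact hG.firstAtom_liesAboveEarlierAtom_or_isFirstAtom htu huv le_top
end

section
/- Let P be a finite bounded poset and let Σ be a generalized recursive atom ordering of P. Then the chain-atom ordering obtained by applying the atom reordering process to Σ (with respect to any linear extension of P) is itself a generalized recursive atom ordering of P. -/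
/-- `MemF S uminus rminus u v a`: the atom `a` of the rooted interval `[u,v]_{rminus·u}`
belongs to the set `F_r(u,v)`: `a` lies above some atom `u'` of `[uminus,v]_{rminus}`
that comes earlier than `u` in the `S`-order on the atoms of `[uminus,⊤]_{rminus}`. -/
def MemF {α : Type*} [PartialOrder α] (S : ChainAtomOrdering α)
    (uminus : α) (rminus : List α) (u v a : α) : Prop :=
  u ⋖ a ∧ a ≤ v ∧ ∃ u', uminus ⋖ u' ∧ u' ≤ v ∧ S.lt uminus rminus u' u ∧ u' < a

/-- `MemG S uminus rminus u v a`: the atom `a` of `[u,v]_{rminus·u}` belongs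
to `G_r(u,v)`, the complement of `F_r(u,v)` among the atoms of `[u,v]`. -/
def MemG {α : Type*} [PartialOrder α] (S : ChainAtomOrdering α)
    (uminus : α) (rminus : List α) (u v a : α) : Prop :=
  u ⋖ a ∧ a ≤ v ∧ ¬ MemF S uminus rminus u v a

/-- `IsReorderingOn v Ω Γ`: the chain-atom ordering `Γ` (restricted to the interval
`[⊥,v]`) is the result of applying the atom reordering process to the restriction of
`Ω` to `[⊥,v]`.  This is the declarative characterization of the bottom-to-top
reordering procedure (for any linear extension): the order on the atoms of `[⊥,v]`
is unchanged, and for each `u ≠ ⊥` with root `rminus·u`, the elements of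
`F_r(u,v)` (computed with respect to the already-reordered orders strictly below `u`,
i.e. with respect to `Γ`) precede those of `G_r(u,v)`, and the relative `Ω`-order
within `F_r(u,v)` and within `G_r(u,v)` is preserved. -/
def IsReorderingOn {α : Type*} [PartialOrder α] [OrderBot α] (v : α)
    (Om Ga : ChainAtomOrdering α) : Prop :=
  (∀ a b, (⊥ : α) ⋖ a → a ≤ v → (⊥ : α) ⋖ b → b ≤ v →
    (Ga.lt ⊥ [⊥] a b ↔ Om.lt ⊥ [⊥] a b)) ∧
  (∀ (rminus : List α) (uminus u : α), SatChain (⊥ : α) uminus rminus → uminus ⋖ u →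
    ∀ a b, u ⋖ a → a ≤ v → u ⋖ b → b ≤ v →
      (Ga.lt u (rminus ++ [u]) a b ↔
        (MemF Ga uminus rminus u v a ∧ ¬ MemF Ga uminus rminus u v b) ∨
        ((MemF Ga uminus rminus u v a ↔ MemF Ga uminus rminus u v b) ∧
          Om.lt u (rminus ++ [u]) a b)))

/-- `Γ` is the result of applying the atom reordering process to `Ω` on all of `α`. -/
def IsReordering {α : Type*} [PartialOrder α] [BoundedOrder α]
    (Om Ga : ChainAtomOrdering α) : Prop :=
  IsReorderingOn (⊤ : α) Om Ga

/-!
The reordering only moves, at each rooted element `u`, the atoms of `F_r(u)` to the front, and a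
move of this kind yields condition (i)(b) by itself: the first atom of an interval `[a,w]` lies in
`F` as soon as some atom of it does. What has to be shown is that condition (ii) survives and that
the sets `F` computed from the reordered orders coincide with those computed from `Σ`; the latter
is proved going up along roots. Both rest on one consequence of (i)(b) for `Σ` at the parent of `u`:
if an atom `a ∈ F` and a `Σ`-earlier atom lie below some `z ⋗ a`, then the `Σ`-first atom of
`[u,z]` lies in `F` and precedes `a`. Hence below any `y` the `Σ`-first atom of `F` precedes every
atom of `G`, and "some atom below `y` comes before `a`" means the same for `Σ` and for the
reordered ordering.
-/

section

variable {α : Type*} [PartialOrder α]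

theorem SatChain.singleton (x : α) : SatChain x x [x] :=
  ⟨List.isChain_singleton x, rfl, rfl⟩

theorem SatChain.snoc {x y z : α} {l : List α} (hl : SatChain x y l) (hyz : y ⋖ z) :
    SatChain x z (l ++ [z]) := by
  obtain ⟨hch, hhead, hlast⟩ := hl
  have hne : l ≠ [] := by rintro rfl; simp at hhead
  refine ⟨List.IsChain.append hch (List.isChain_singleton z) ?_, ?_, List.getLast?_concat⟩
  · simpa [hlast] using hyz
  · rwa [List.head?_append_of_ne_nil _ hne]

@[elab_as_elim]
theorem SatChain.induction {x : α} {motive : ∀ y l, SatChain x y l → Prop}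
    (singleton : motive x [x] (SatChain.singleton x))
    (snoc : ∀ {l y z} (h : SatChain x y l) (hyz : y ⋖ z), motive y l h →
      motive z (l ++ [z]) (h.snoc hyz))
    {y : α} {l : List α} (h : SatChain x y l) : motive y l h := by
  induction l using List.reverseRecOn generalizing y with
  | nil => simp [SatChain] at h
  | append_singleton l a ih =>
    obtain ⟨hch, hhead, hlast⟩ := h
    obtain rfl : a = y := by simpa using hlast
    by_cases hl : l = []
    · subst hl
      obtain rfl : a = x := by simpa using hhead
      exact singleton
    · have hch' := List.isChain_append.1 hch
      have hlast' := List.getLast?_eq_some_getLast hl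
      have hsat : SatChain x (l.getLast hl) l :=
        ⟨hch'.1, by rwa [List.head?_append_of_ne_nil _ hl] at hhead, hlast'⟩
      exact snoc hsat (hch'.2.2 _ (by simp [hlast']) a rfl) (ih hsat)

namespace ChainAtomOrdering

variable (T : ChainAtomOrdering α)

theorem asymm {u : α} {r : List α} {a b : α} (h : T.lt u r a b) : ¬ T.lt u r b a :=
  fun h' => T.irrefl u r a (T.trans u r a b a h h')

theorem ne_of_lt {u : α} {r : List α} {a b : α} (h : T.lt u r a b) : a ≠ b := by
  rintro rfl
  exact T.irrefl u r a h

theorem exists_first [Finite α] (u : α) (r : List α) {p : α → Prop} (hp : ∀ c, p c → u ⋖ c)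
    (hne : ∃ c, p c) : ∃ b, p b ∧ ∀ c, p c → c ≠ b → T.lt u r b c := by
  have : IsTrans α (T.lt u r) := ⟨T.trans u r⟩
  have : Std.Irrefl (T.lt u r) := ⟨T.irrefl u r⟩
  obtain ⟨b, hb, hmin⟩ :=
    (Finite.wellFounded_of_trans_of_irrefl (T.lt u r)).has_min {c | p c} hne
  exact ⟨b, hb, fun c hc hcb =>
    (T.total u r b c (hp b hb) (hp c hc) hcb.symm).resolve_right (hmin c hc)⟩

def CondII (u : α) (r : List α) : Prop :=
  ∀ ai aj y, u ⋖ ai → u ⋖ aj → T.lt u r ai aj → ai < y → aj < y →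
    ∃ ak z, u ⋖ ak ∧ T.lt u r ak aj ∧ aj ⋖ z ∧ z ≤ y ∧ ak < z

theorem CondII.congr {T T' : ChainAtomOrdering α} {u : α} {r : List α}
    (h : ∀ a b, u ⋖ a → u ⋖ b → (T'.lt u r a b ↔ T.lt u r a b)) (hT : T.CondII u r) :
    T'.CondII u r := by
  intro ai aj y hai haj hij hiy hjy
  obtain ⟨ak, z, hak, hakj, hjz, hzy, hakz⟩ :=
    hT ai aj y hai haj ((h ai aj hai haj).1 hij) hiy hjy
  exact ⟨ak, z, hak, (h ak aj hak haj).2 hakj, hjz, hzy, hakz⟩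

end ChainAtomOrdering

theorem memF_congr {T T' : ChainAtomOrdering α} {um u : α} {rm : List α}
    (h : ∀ b, um ⋖ b → (T'.lt um rm b u ↔ T.lt um rm b u)) {v x : α} :
    MemF T' um rm u v x ↔ MemF T um rm u v x := by
  constructor <;> rintro ⟨hx, hxv, b, hb, hbv, hbu, hbx⟩
  exacts [⟨hx, hxv, b, hb, hbv, (h b hb).1 hbu, hbx⟩, ⟨hx, hxv, b, hb, hbv, (h b hb).2 hbu, hbx⟩]

def MovesToFront (F : α → Prop) (T T' : ChainAtomOrdering α) (u : α) (r : List α) : Prop :=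
  ∀ a b, u ⋖ a → u ⋖ b → (T'.lt u r a b ↔ (F a ∧ ¬ F b) ∨ ((F a ↔ F b) ∧ T.lt u r a b))

namespace MovesToFront

variable {F G : α → Prop} {T T' : ChainAtomOrdering α} {u : α} {r : List α}

theorem congr (h : MovesToFront F T T' u r) (hFG : ∀ a, u ⋖ a → (F a ↔ G a)) :
    MovesToFront G T T' u r := fun a b ha hb => by
  rw [h a b ha hb, hFG a ha, hFG b hb]

theorem lt_of_lt (h : MovesToFront F T T' u r) {a b : α} (ha : u ⋖ a) (hb : u ⋖ b)
    (hab : T.lt u r a b) (hF : F b → F a) : T'.lt u r a b := by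
  rw [h a b ha hb]
  by_cases hFa : F a
  · by_cases hFb : F b
    exacts [.inr ⟨iff_of_true hFa hFb, hab⟩, .inl ⟨hFa, hFb⟩]
  · exact .inr ⟨iff_of_false hFa (mt hF hFa), hab⟩

theorem lt_or (h : MovesToFront F T T' u r) {a b : α} (ha : u ⋖ a) (hb : u ⋖ b)
    (hab : T'.lt u r a b) : T.lt u r a b ∨ (F a ∧ ¬ F b) := by
  rcases (h a b ha hb).1 hab with hF | ⟨-, hT⟩
  exacts [.inr hF, .inl hT]

theorem mem_of_lt (h : MovesToFront F T T' u r) {a b : α} (ha : u ⋖ a) (hb : u ⋖ b)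
    (hab : T'.lt u r a b) (hFb : F b) : F a := by
  rcases (h a b ha hb).1 hab with ⟨hFa, -⟩ | ⟨hiff, -⟩
  exacts [hFa, hiff.2 hFb]

end MovesToFront

section OrderTop

variable [OrderTop α]

namespace ChainAtomOrdering

variable (T : ChainAtomOrdering α)

def CondIB (u : α) (r : List α) : Prop :=
  ∀ a x w, u ⋖ a → a ⋖ x → x ⋖ w →
    (∃ b, T.IsFirstAtom a w (r ++ [a]) b ∧ MemF T u r a ⊤ b) ∨
    ∀ b, a ⋖ b → b ≤ w → ¬ MemF T u r a ⊤ b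

end ChainAtomOrdering

namespace IsGRAO

variable {T : ChainAtomOrdering α} {u : α} {r : List α}

theorem atom_top (hG : IsGRAO T u ⊤ r) {a : α} (ha : u ⋖ a) : IsGRAO T a ⊤ (r ++ [a]) := by
  cases hG with
  | base _ _ _ htop =>
    obtain rfl : a = ⊤ := (eq_top_or_lt_top a).resolve_right (htop.2 ha.lt)
    refine .step _ _ _ ?_ ?_ ?_
    · exact fun b hb _ => absurd hb.lt not_top_lt
    · exact fun b _ _ hb _ _ _ _ => absurd hb.lt not_top_lt
    · exact fun b _ _ hb _ _ _ _ _ _ _ => absurd hb.lt not_top_lt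
  | step _ _ _ ia _ _ => exact ia a ha le_top

theorem condIB_top (hG : IsGRAO T u ⊤ r) : T.CondIB u r := by
  intro a x w ha hax hxw
  cases hG with
  | base _ _ _ htop => exact absurd (hax.lt.trans_le le_top) (htop.2 ha.lt)
  | step _ _ _ _ ib _ =>
    rcases ib a x w ha le_top hax hxw le_top with ⟨b, hb, a', ha', -, ha'a, ha'b⟩ | hnone
    · exact .inl ⟨b, hb, hb.1, le_top, a', ha', le_top, ha'a, ha'b⟩
    · exact .inr fun b hb hbw ⟨_, _, a', ha', _, ha'a, ha'b⟩ =>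
        hnone b a' hb hbw ha' le_top ha'a ha'b

theorem condII_top (hG : IsGRAO T u ⊤ r) : T.CondII u r := by
  intro ai aj y hai haj hij hiy hjy
  cases hG with
  | base _ _ _ htop => exact absurd (hjy.trans_le le_top) (htop.2 haj.lt)
  | step _ _ _ _ _ ii =>
    obtain ⟨ak, z, hak, -, hakj, hjz, hzy, hakz⟩ :=
      ii ai aj y hai le_top haj le_top hij hiy hjy le_top
    exact ⟨ak, z, hak, hakj, hjz, hzy, hakz⟩

end IsGRAO

variable {T T' : ChainAtomOrdering α} {um u : α} {rm : List α}

theorem ChainAtomOrdering.CondIB.exists_memF_lt_below (hib : T.CondIB um rm) (hu : um ⋖ u)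
    {a z b : α} (hFa : MemF T um rm u ⊤ a) (haz : a ⋖ z) (hb : u ⋖ b) (hbz : b < z)
    (hba : T.lt u (rm ++ [u]) b a) :
    ∃ c, MemF T um rm u ⊤ c ∧ T.lt u (rm ++ [u]) c a ∧ c < z := by
  rcases hib u a z hu hFa.1 haz with ⟨c, ⟨hc, hcz, hfirst⟩, hFc⟩ | hnone
  · have hca : c ≠ a := by
      rintro rfl
      exact T.asymm hba (hfirst b hb hbz.le (T.ne_of_lt hba))
    refine ⟨c, hFc, hfirst a hFa.1 haz.le hca.symm, hcz.lt_of_ne ?_⟩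
    rintro rfl
    exact hc.2 hFa.1.lt haz.lt
  · exact absurd hFa (hnone a hFa.1 haz.le)

theorem ChainAtomOrdering.CondIB.exists_lt_below_of_not_memF [Finite α]
    (hib : T.CondIB um rm) (hii : T.CondII u (rm ++ [u])) (hu : um ⋖ u)
    {a c y : α} (ha : u ⋖ a) (hFa : ¬ MemF T um rm u ⊤ a) (hay : a < y)
    (hFc : MemF T um rm u ⊤ c) (hcy : c < y) :
    ∃ b, u ⋖ b ∧ T.lt u (rm ++ [u]) b a ∧ b < y := by
  obtain ⟨b, ⟨hFb, hby⟩, hmin⟩ := T.exists_first u (rm ++ [u])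
    (p := fun c => MemF T um rm u ⊤ c ∧ c < y) (fun c hc => hc.1.1) ⟨c, hFc, hcy⟩
  have hba : b ≠ a := by
    rintro rfl
    exact hFa hFb
  refine ⟨b, hFb.1, (T.total _ _ b a hFb.1 ha hba).resolve_right fun hab => ?_, hby⟩
  obtain ⟨d, w, hd, hdb, hbw, hwy, hdw⟩ := hii a b y ha hFb.1 hab hay hby
  obtain ⟨e, hFe, heb, hew⟩ := hib.exists_memF_lt_below hu hFb hbw hd hdw hdb
  exact T.asymm heb (hmin e ⟨hFe, hew.trans_le hwy⟩ (T.ne_of_lt heb))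

namespace MovesToFront

theorem exists_lt_below [Finite α] (hT' : MovesToFront (MemF T um rm u ⊤) T T' u (rm ++ [u]))
    (hib : T.CondIB um rm) (hii : T.CondII u (rm ++ [u])) (hu : um ⋖ u) {a b y : α}
    (ha : u ⋖ a) (hay : a < y) (hb : u ⋖ b) (hba : T'.lt u (rm ++ [u]) b a) (hby : b < y) :
    ∃ c, u ⋖ c ∧ T.lt u (rm ++ [u]) c a ∧ c < y := by
  rcases hT'.lt_or hb ha hba with hba' | ⟨hFb, hFa⟩
  · exact ⟨b, hb, hba', hby⟩
  · exact hib.exists_lt_below_of_not_memF hii hu ha hFa hay hFb hby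

theorem exists_lt_cover (hT' : MovesToFront (MemF T um rm u ⊤) T T' u (rm ++ [u]))
    (hib : T.CondIB um rm) (hii : T.CondII u (rm ++ [u])) (hu : um ⋖ u) {a b y : α}
    (ha : u ⋖ a) (hay : a < y) (hb : u ⋖ b) (hba : T.lt u (rm ++ [u]) b a) (hby : b < y) :
    ∃ c z, u ⋖ c ∧ T'.lt u (rm ++ [u]) c a ∧ a ⋖ z ∧ z ≤ y ∧ c < z := by
  obtain ⟨d, z, hd, hda, haz, hzy, hdz⟩ := hii b a y hb ha hba hby hay
  by_cases hFa : MemF T um rm u ⊤ a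
  · obtain ⟨c, hFc, hca, hcz⟩ := hib.exists_memF_lt_below hu hFa haz hd hdz hda
    exact ⟨c, z, hFc.1, hT'.lt_of_lt hFc.1 ha hca fun _ => hFc, haz, hzy, hcz⟩
  · exact ⟨d, z, hd, hT'.lt_of_lt hd ha hda (absurd · hFa), haz, hzy, hdz⟩

theorem condII [Finite α] (hT' : MovesToFront (MemF T um rm u ⊤) T T' u (rm ++ [u]))
    (hib : T.CondIB um rm) (hii : T.CondII u (rm ++ [u])) (hu : um ⋖ u) :
    T'.CondII u (rm ++ [u]) := by
  intro ai aj y hai haj hij hiy hjy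
  obtain ⟨b, hb, hbj, hby⟩ := hT'.exists_lt_below hib hii hu haj hjy hai hij hiy
  exact hT'.exists_lt_cover hib hii hu haj hjy hb hbj hby

theorem memF_iff [Finite α] (hT' : MovesToFront (MemF T um rm u ⊤) T T' u (rm ++ [u]))
    (hib : T.CondIB um rm) (hii : T.CondII u (rm ++ [u])) (hu : um ⋖ u) {a x : α}
    (ha : u ⋖ a) (hax : a ⋖ x) :
    MemF T' u (rm ++ [u]) a ⊤ x ↔ MemF T u (rm ++ [u]) a ⊤ x := by
  constructor <;> rintro ⟨-, -, b, hb, -, hba, hbx⟩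
  · obtain ⟨c, hc, hca, hcx⟩ := hT'.exists_lt_below hib hii hu ha hax.lt hb hba hbx
    exact ⟨hax, le_top, c, hc, le_top, hca, hcx⟩
  · obtain ⟨c, z, hc, hca, -, hzx, hcz⟩ := hT'.exists_lt_cover hib hii hu ha hax.lt hb hba hbx
    exact ⟨hax, le_top, c, hc, le_top, hca, hcz.trans_le hzx⟩

end MovesToFront

end OrderTop

section BoundedOrder

variable [BoundedOrder α]

theorem IsGRAO.of_satChain_s10 {T : ChainAtomOrdering α} (h : IsGRAO T ⊥ ⊤ [⊥]) {u : α}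
    {r : List α} (hs : SatChain ⊥ u r) : IsGRAO T u ⊤ r := by
  induction hs using SatChain.induction with
  | singleton => exact h
  | snoc _ hu ih => exact ih.atom_top hu

theorem isGRAO_top_of_condIB_of_condII [Finite α] {T : ChainAtomOrdering α}
    (hib : ∀ u r, SatChain ⊥ u r → T.CondIB u r) (hii : ∀ u r, SatChain ⊥ u r → T.CondII u r)
    {u : α} {r : List α} (hs : SatChain ⊥ u r) : IsGRAO T u ⊤ r := by
  induction u using WellFoundedGT.induction generalizing r with
  | _ u ih =>
    refine .step u ⊤ r (fun a ha _ => ih a ha.lt (hs.snoc ha)) ?_ ?_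
    · intro a x w ha _ hax hxw _
      rcases hib u r hs a x w ha hax hxw with ⟨b, hb, _, _, a', ha', _, ha'a, ha'b⟩ | hnone
      · exact .inl ⟨b, hb, a', ha', le_top, ha'a, ha'b⟩
      · exact .inr fun b a' hb hbw ha' _ ha'a ha'b =>
          hnone b hb hbw ⟨hb, le_top, a', ha', le_top, ha'a, ha'b⟩
    · intro ai aj y hai _ haj _ hij hiy hjy _
      obtain ⟨ak, z, hak, hakj, hjz, hzy, hakz⟩ := hii u r hs ai aj y hai haj hij hiy hjy
      exact ⟨ak, z, hak, le_top, hakj, hjz, hzy, hakz⟩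

namespace IsReordering

variable {S S' : ChainAtomOrdering α}

theorem lt_bot_iff (hre : IsReordering S S') {a b : α} (ha : ⊥ ⋖ a) (hb : ⊥ ⋖ b) :
    S'.lt ⊥ [⊥] a b ↔ S.lt ⊥ [⊥] a b :=
  hre.1 a b ha le_top hb le_top

theorem movesToFront (hre : IsReordering S S') {um u : α} {rm : List α}
    (hs : SatChain ⊥ um rm) (hu : um ⋖ u) :
    MovesToFront (MemF S' um rm u ⊤) S S' u (rm ++ [u]) :=
  fun a b ha hb => hre.2 rm um u hs hu a b ha le_top hb le_top

theorem condIB [Finite α] (hre : IsReordering S S') {u : α} {r : List α}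
    (hs : SatChain ⊥ u r) : S'.CondIB u r := by
  intro a x w ha hax hxw
  by_cases hsome : ∃ b, b ≤ w ∧ MemF S' u r a ⊤ b
  · obtain ⟨b₀, hb₀w, hFb₀⟩ := hsome
    obtain ⟨b, ⟨hb, hbw⟩, hfirst⟩ := S'.exists_first a (r ++ [a])
      (p := fun c => a ⋖ c ∧ c ≤ w) (fun c hc => hc.1) ⟨x, hax, hxw.le⟩
    refine .inl ⟨b, ⟨hb, hbw, fun c hc hcw hcb => hfirst c ⟨hc, hcw⟩ hcb⟩, ?_⟩
    rcases eq_or_ne b₀ b with rfl | hne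
    · exact hFb₀
    · exact (hre.movesToFront hs ha).mem_of_lt hb hFb₀.1 (hfirst b₀ ⟨hFb₀.1, hb₀w⟩ hne) hFb₀
  · exact .inr fun b _ hbw hFb => hsome ⟨b, hbw, hFb⟩

theorem memF_iff [Finite α] (h : IsGRAO S ⊥ ⊤ [⊥]) (hre : IsReordering S S') {u : α}
    {r : List α} (hs : SatChain ⊥ u r) {a x : α} (ha : u ⋖ a) (hax : a ⋖ x) :
    MemF S' u r a ⊤ x ↔ MemF S u r a ⊤ x := by
  induction hs using SatChain.induction generalizing a x with
  | singleton => exact memF_congr fun b hb => hre.lt_bot_iff hb ha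
  | snoc hsm hu ih =>
    have hGm := h.of_satChain_s10 hsm
    exact ((hre.movesToFront hsm hu).congr fun b hb => ih hu hb).memF_iff
      hGm.condIB_top (hGm.atom_top hu).condII_top hu ha hax

theorem condII [Finite α] (h : IsGRAO S ⊥ ⊤ [⊥]) (hre : IsReordering S S') {u : α}
    {r : List α} (hs : SatChain ⊥ u r) : S'.CondII u r := by
  induction hs using SatChain.induction with
  | singleton => exact h.condII_top.congr fun a b ha hb => hre.lt_bot_iff ha hb
  | snoc hsm hu _ =>
    have hGm := h.of_satChain_s10 hsm
    exact ((hre.movesToFront hsm hu).congr fun b hb => hre.memF_iff h hsm hu hb).condII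
      hGm.condIB_top (hGm.atom_top hu).condII_top hu

end IsReordering

end BoundedOrder

end

/-- Applying the atom reordering process (for any linear extension of the poset; the
result is characterized by `IsReordering` independently of the chosen extension) to a
generalized recursive atom ordering of a finite bounded poset yields a generalized
recursive atom ordering. -/
theorem stmt_10 {α : Type*} [PartialOrder α] [BoundedOrder α] [Fintype α]
    (S : ChainAtomOrdering α) (h : IsGRAO S ⊥ ⊤ [⊥])
    (S' : ChainAtomOrdering α) (hre : IsReordering S S') :
    IsGRAO S' ⊥ ⊤ [⊥] :=
  isGRAO_top_of_condIB_of_condII (fun _ _ => hre.condIB) (fun _ _ => hre.condII h)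
    (SatChain.singleton ⊥)
end

section
/- Every CC-labeling of a finite bounded poset P is a topological CL-labeling of P. Moreover, the converse fails: there exists a finite bounded poset with a topological CL-labeling that is not a CC-labeling. -/
/-- The label sequence of a saturated chain, read from bottom to top.  Here
`lab r x y` is the label of the cover relation `x ⋖ y` with respect to the root `r`
(a saturated chain from `⊥` to `x` recorded as a list ending in `x`); this encodes a
chain-edge (CE-) labeling.  The first list argument is the root of the head of the
chain, the second is the chain itself. -/
def labelSeq {α Q : Type*} (lab : List α → α → α → Q) : List α → List α → List Q
  | _, [] => []
  | _, [_] => []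
  | r, x :: y :: c => lab r x y :: labelSeq lab (r ++ [y]) (y :: c)

/-- `u ⋖ v ⋖ w` is a topological ascent with respect to the root `r`: the label
sequence of `u ⋖ v ⋖ w` is lexicographically strictly smaller than that of every
other saturated chain from `u` to `w`. -/
def TopAscent {α Q : Type*} [PartialOrder α] [LinearOrder Q]
    (lab : List α → α → α → Q) (r : List α) (u v w : α) : Prop :=
  u ⋖ v ∧ v ⋖ w ∧ ∀ c, SatChain u w c → c ≠ [u, v, w] →
    List.Lex (· < ·) (labelSeq lab r [u, v, w]) (labelSeq lab r c)

/-- The saturated chain (second argument) is topologically ascending with respect to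
the root given as first argument: every consecutive triple on it is a topological
ascent (with respect to the appropriately extended root). -/
def TopAscending {α Q : Type*} [PartialOrder α] [LinearOrder Q]
    (lab : List α → α → α → Q) : List α → List α → Prop
  | r, u :: v :: w :: c => TopAscent lab r u v w ∧ TopAscending lab (r ++ [v]) (v :: w :: c)
  | _, _ => True

/-- `lab` is a CC-labeling: every rooted interval `[u,v]_r` has exactly one
topologically ascending saturated chain, distinct saturated chains of `[u,v]_r` have
distinct label sequences, and no label sequence is a prefix of another. -/
def IsCCLabeling {α Q : Type*} [PartialOrder α] [OrderBot α] [LinearOrder Q]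
    (lab : List α → α → α → Q) : Prop :=
  ∀ u v r, SatChain (⊥ : α) u r → u ≤ v →
    (∃! c, SatChain u v c ∧ TopAscending lab r c) ∧
    (∀ c c', SatChain u v c → SatChain u v c' → c ≠ c' →
      labelSeq lab r c ≠ labelSeq lab r c' ∧
      ¬ labelSeq lab r c <+: labelSeq lab r c')

/-- `lab` is a CL-labeling: every rooted interval `[u,v]_r` has exactly one saturated
chain with strictly increasing label sequence, and this label sequence is
lexicographically strictly smaller than that of every other saturated chain. -/
def IsCLLabeling {α Q : Type*} [PartialOrder α] [OrderBot α] [LinearOrder Q]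
    (lab : List α → α → α → Q) : Prop :=
  ∀ u v r, SatChain (⊥ : α) u r → u ≤ v →
    ∃ c, SatChain u v c ∧ List.Chain' (· < ·) (labelSeq lab r c) ∧
      (∀ c', SatChain u v c' → List.Chain' (· < ·) (labelSeq lab r c') → c' = c) ∧
      (∀ c', SatChain u v c' → c' ≠ c →
        List.Lex (· < ·) (labelSeq lab r c) (labelSeq lab r c'))

/-- `lab` is a topological CL-labeling: every rooted interval `[u,v]_r` has a unique
saturated chain with lexicographically smallest label sequence, and every other
saturated chain of `[u,v]_r` contains at least one topological descent (i.e. is not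
topologically ascending). -/
def IsTopolCLLabeling {α Q : Type*} [PartialOrder α] [OrderBot α] [LinearOrder Q]
    (lab : List α → α → α → Q) : Prop :=
  ∀ u v r, SatChain (⊥ : α) u r → u ≤ v →
    ∃ c, SatChain u v c ∧
      (∀ c', SatChain u v c' → c' ≠ c →
        List.Lex (· < ·) (labelSeq lab r c) (labelSeq lab r c')) ∧
      (∀ c', SatChain u v c' → c' ≠ c → ¬ TopAscending lab r c')

/-- `lab` has the unique earliest (UE) property: in each rooted interval `[u,v]_r`,
the smallest label on the cover relations upward from `u` occurs on only one such
cover relation. -/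
def HasUE {α Q : Type*} [PartialOrder α] [OrderBot α] [LinearOrder Q]
    (lab : List α → α → α → Q) : Prop :=
  ∀ u v r, SatChain (⊥ : α) u r → u ≤ v →
    ∀ a b, u ⋖ a → a ≤ v → u ⋖ b → b ≤ v →
      (∀ a', u ⋖ a' → a' ≤ v → lab r u a ≤ lab r u a') →
      (∀ a', u ⋖ a' → a' ≤ v → lab r u b ≤ lab r u a') → a = b

/-- `lab` is self-consistent: whenever `c₀` is the lexicographically strictly first
saturated chain of a rooted interval `[u,v]_r`, with `a` the atom on `c₀` and
`b ≠ a` another atom of `[u,v]_r`, then for every `v'` above both `a` and `b`, every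
saturated chain of `[u,v']_r` through `b` is lexicographically later than every
saturated chain of `[u,v']_r` through `a`. -/
def SelfConsistent {α Q : Type*} [PartialOrder α] [OrderBot α] [LinearOrder Q]
    (lab : List α → α → α → Q) : Prop :=
  ∀ u v r, SatChain (⊥ : α) u r → ∀ c₀, SatChain u v c₀ →
    (∀ c, SatChain u v c → c ≠ c₀ →
      List.Lex (· < ·) (labelSeq lab r c₀) (labelSeq lab r c)) →
    ∀ a, u ⋖ a → a ∈ c₀ →
    ∀ b, u ⋖ b → b ≤ v → b ≠ a →
    ∀ v', a ≤ v' → b ≤ v' →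
    ∀ ca cb, SatChain u v' ca → a ∈ ca → SatChain u v' cb → b ∈ cb →
      List.Lex (· < ·) (labelSeq lab r ca) (labelSeq lab r cb)

/-!
The label sequences of a CC-labeling are pairwise distinct and prefix-free in every rooted
interval, so each interval has a unique lexicographically smallest saturated chain `m`. This chain
is topologically ascending: if a chain `d` of `[u,z]` were lexicographically below a segment
`u ⋖ y ⋖ z` of `m`, then, the comparison not being a prefix relation, splicing `d` into `m` in
place of that segment would produce a chain lexicographically below `m`. As the ascending chain
is unique, every other chain has a topological descent.

For the converse, label the six-element poset `P6` by `1` on `o ⋖ a` and `o ⋖ x` and by `0`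
elsewhere. Its finitely many saturated chains are checked by computation to give a topological
CL-labeling, but in `[o,t]` the label sequence `10` of `o ⋖ x ⋖ t` is a prefix of the label
sequence `100` of `o ⋖ a ⋖ b ⋖ t`.
-/

theorem List.lt_append_of_lt_of_not_isPrefix {Q : Type*} [LinearOrder Q] {s t : List Q}
    (h : s < t) (hst : ¬ s <+: t) (a b : List Q) : s ++ a < t ++ b := by
  induction h with
  | nil => exact absurd List.nil_prefix hst
  | rel hab => exact List.Lex.rel hab
  | cons _ ih => exact List.Lex.cons (ih fun hp => hst (List.cons_prefix_cons.2 ⟨rfl, hp⟩))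

theorem labelSeq_isPrefix_append {α Q : Type*} (lab : List α → α → α → Q) (r c e : List α) :
    labelSeq lab r c <+: labelSeq lab r (c ++ e) := by
  induction c generalizing r with
  | nil => simp [labelSeq]
  | cons x c ih =>
    cases c with
    | nil => simp [labelSeq]
    | cons y c => exact List.cons_prefix_cons.2 ⟨rfl, ih (r ++ [y])⟩

variable {α Q : Type*} [PartialOrder α] [LinearOrder Q]

namespace SatChain

theorem exists_eq_cons {x y : α} {l : List α} (h : SatChain x y l) : ∃ t, l = x :: t := by
  obtain ⟨-, hx, -⟩ := h
  cases l with
  | nil => simp at hx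
  | cons a t => exact ⟨t, by simpa using hx⟩

theorem singleton_s14 (x : α) : SatChain x x [x] := ⟨List.isChain_singleton x, rfl, rfl⟩

theorem cons {u y v : α} {c : List α} (huy : u ⋖ y) (h : SatChain y v (y :: c)) :
    SatChain u v (u :: y :: c) :=
  ⟨List.isChain_cons_cons.2 ⟨huy, h.1⟩, rfl, h.2.2⟩

theorem of_cons {u y v : α} {c : List α} (h : SatChain u v (u :: y :: c)) :
    u ⋖ y ∧ SatChain y v (y :: c) :=
  ⟨(List.isChain_cons_cons.1 h.1).1, (List.isChain_cons_cons.1 h.1).2, rfl, h.2.2⟩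

theorem append {u z v : α} {d t : List α} (hd : SatChain u z d) (ht : SatChain z v (z :: t)) :
    SatChain u v (d ++ t) := by
  obtain ⟨d', rfl⟩ := hd.exists_eq_cons
  refine ⟨hd.1.append ht.1.tail fun a ha b hb => ?_, rfl, ?_⟩
  · rw [hd.2.2, Option.mem_some_iff] at ha
    subst ha
    cases t with
    | nil => simp at hb
    | cons w t => simpa [← Option.mem_some_iff.1 hb] using (List.isChain_cons_cons.1 ht.1).1
  · cases t with
    | nil => simpa using hd.2.2.trans ht.2.2
    | cons w t =>
      rw [List.cons_append, ← List.cons_append, List.getLast?_append_cons]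
      exact ht.2.2

theorem finite [Finite α] (u v : α) : {c : List α | SatChain u v c}.Finite := by
  cases nonempty_fintype α
  refine (List.finite_length_le α (Fintype.card α)).subset fun c hc => ?_
  have hlt : c.IsChain (· < ·) := hc.1.imp fun _ _ h => h.lt
  exact List.Nodup.length_le_card ((List.isChain_iff_pairwise.1 hlt).imp ne_of_lt)

theorem exists_of_le [IsStronglyAtomic α] [WellFoundedGT α] {u v : α} (huv : u ≤ v) :
    ∃ c, SatChain u v c := by
  induction u using WellFoundedGT.induction with
  | _ u ih =>
    rcases huv.eq_or_lt with rfl | hlt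
    · exact ⟨[u], singleton_s14 u⟩
    · obtain ⟨y, huy, hyv⟩ := exists_covBy_le_of_lt hlt
      obtain ⟨c, hc⟩ := ih y huy.lt hyv
      obtain ⟨t, rfl⟩ := hc.exists_eq_cons
      exact ⟨_, hc.cons huy⟩

end SatChain

instance SatChain.decidable {α : Type*} [PartialOrder α] [DecidableEq α]
    [DecidableRel ((· ⋖ ·) : α → α → Prop)] (x y : α) (l : List α) : Decidable (SatChain x y l) :=
  inferInstanceAs (Decidable (l.IsChain (· ⋖ ·) ∧ l.head? = some x ∧ l.getLast? = some y))

section LexMin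

variable (lab : List α → α → α → Q)

def IsLexMinChain (r : List α) (u v : α) (m : List α) : Prop :=
  SatChain u v m ∧ ∀ c, SatChain u v c → labelSeq lab r m ≤ labelSeq lab r c

variable {lab}

theorem exists_isLexMinChain [Finite α] (r : List α) {u v : α} (h : ∃ c, SatChain u v c) :
    ∃ m, IsLexMinChain lab r u v m := by
  obtain ⟨m, hm, hmin⟩ := Set.exists_min_image _ (labelSeq lab r) (SatChain.finite u v) h
  exact ⟨m, hm, hmin⟩

theorem IsLexMinChain.tail {r : List α} {u y v : α} {t : List α}
    (hm : IsLexMinChain lab r u v (u :: y :: t)) :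
    IsLexMinChain lab (r ++ [y]) y v (y :: t) := by
  refine ⟨hm.1.of_cons.2, fun c hc => ?_⟩
  obtain ⟨c, rfl⟩ := hc.exists_eq_cons
  exact le_of_not_gt fun hlt => (hm.2 _ (hc.cons hm.1.of_cons.1)).not_gt (List.Lex.cons hlt)

end LexMin

section PrefixFree

variable [OrderBot α] (lab : List α → α → α → Q)

def HasPrefixFreeLabels : Prop :=
  ∀ u v r, SatChain (⊥ : α) u r → u ≤ v →
    ∀ c c', SatChain u v c → SatChain u v c' → c ≠ c' →
      labelSeq lab r c ≠ labelSeq lab r c' ∧ ¬ labelSeq lab r c <+: labelSeq lab r c'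

variable {lab}

theorem IsCCLabeling.hasPrefixFreeLabels (hCC : IsCCLabeling lab) : HasPrefixFreeLabels lab :=
  fun u v r hr huv => (hCC u v r hr huv).2

namespace IsLexMinChain

variable {r : List α} {u v : α}

theorem lt_of_ne {m : List α} (hm : IsLexMinChain lab r u v m) (hpf : HasPrefixFreeLabels lab)
    (hr : SatChain ⊥ u r) (huv : u ≤ v) {c : List α} (hc : SatChain u v c) (hne : c ≠ m) :
    labelSeq lab r m < labelSeq lab r c :=
  (hm.2 c hc).lt_of_ne (hpf u v r hr huv m c hm.1 hc hne.symm).1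

theorem topAscent {y z : α} {t : List α} (hm : IsLexMinChain lab r u v (u :: y :: z :: t))
    (hpf : HasPrefixFreeLabels lab) (hr : SatChain ⊥ u r) : TopAscent lab r u y z := by
  obtain ⟨huy, hyv⟩ := hm.1.of_cons
  obtain ⟨hyz, hzv⟩ := hyv.of_cons
  have huyz : SatChain u z [u, y, z] := (SatChain.singleton_s14 z).cons hyz |>.cons huy
  refine ⟨huy, hyz, fun d hd hne => ?_⟩
  refine (lt_of_not_ge fun hle => ?_ : labelSeq lab r [u, y, z] < labelSeq lab r d)
  have hpf_d := hpf u z r hr (huy.le.trans hyz.le) d [u, y, z] hd huyz hne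
  have hsplice : labelSeq lab r (d ++ t) < labelSeq lab r (u :: y :: z :: t) := by
    obtain ⟨e, he⟩ := labelSeq_isPrefix_append lab r d t
    rw [← he]
    exact List.lt_append_of_lt_of_not_isPrefix (hle.lt_of_ne hpf_d.1) hpf_d.2 _ _
  exact (hm.2 _ (hd.append hzv)).not_gt hsplice

end IsLexMinChain

theorem IsLexMinChain.topAscending (hpf : HasPrefixFreeLabels lab) {v : α} :
    ∀ {r : List α} {u : α} {m : List α}, SatChain ⊥ u r → IsLexMinChain lab r u v m →
      TopAscending lab r m
  | r, u, x :: y :: z :: t, hr, hm => by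
    obtain rfl : x = u := Option.some.inj hm.1.2.1
    have hry : SatChain ⊥ y (r ++ [y]) := hr.append ((SatChain.singleton_s14 y).cons hm.1.of_cons.1)
    exact ⟨hm.topAscent hpf hr, hm.tail.topAscending hpf hry⟩
  | _, _, [], _, _ | _, _, [_], _, _ | _, _, [_, _], _, _ => trivial

end PrefixFree

theorem IsCCLabeling.isTopolCLLabeling [OrderBot α] [Finite α] {lab : List α → α → α → Q}
    (hCC : IsCCLabeling lab) : IsTopolCLLabeling lab := by
  intro u v r hr huv
  have hpf := hCC.hasPrefixFreeLabels
  obtain ⟨m, hm⟩ := exists_isLexMinChain (lab := lab) r (SatChain.exists_of_le huv)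
  obtain ⟨_, -, huniq⟩ := (hCC u v r hr huv).1
  have hm_asc := hm.topAscending hpf hr
  refine ⟨m, hm.1, fun c hc hne => hm.lt_of_ne hpf hr huv hc hne, fun c hc hne hc_asc => ?_⟩
  exact hne ((huniq c ⟨hc, hc_asc⟩).trans (huniq m ⟨hm.1, hm_asc⟩).symm)

instance TopAscending.decidable {α Q : Type*} [PartialOrder α] [LinearOrder Q]
    {lab : List α → α → α → Q} [∀ r u v w, Decidable (TopAscent lab r u v w)] :
    ∀ r c, Decidable (TopAscending lab r c)
  | r, _ :: v :: w :: c =>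
    @instDecidableAnd _ _ _ (TopAscending.decidable (r ++ [v]) (v :: w :: c))
  | _, [] | _, [_] | _, [_, _] => isTrue trivial

/-- The poset `o < a, a', x`, `a, a' < b`, `b, x < t`. -/
inductive P6 : Type
  | o | a | a' | x | b | t
  deriving DecidableEq

namespace P6

instance : Fintype P6 :=
  ⟨{o, a, a', x, b, t}, fun u => by cases u <;> decide⟩

def ble : P6 → P6 → Bool
  | u, v => u = v || u = o || v = t || ((u = a || u = a') && v = b)

instance : LE P6 := ⟨fun u v => ble u v⟩

instance : DecidableRel ((· ≤ ·) : P6 → P6 → Prop) := fun u v =>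
  inferInstanceAs (Decidable (ble u v = true))

instance : PartialOrder P6 where
  le_refl := by decide
  le_trans := by decide
  le_antisymm := by decide

instance : DecidableRel ((· < ·) : P6 → P6 → Prop) := decidableLTOfDecidableLE

instance : BoundedOrder P6 where
  top := t
  le_top := by decide
  bot := o
  bot_le := by decide

instance : DecidableRel ((· ⋖ ·) : P6 → P6 → Prop) := fun u v =>
  decidable_of_iff (u < v ∧ ∀ z, u < z → ¬ z < v)
    ⟨fun h => ⟨h.1, fun _ hz => h.2 _ hz⟩, fun h => ⟨h.1, fun _ hz => h.2 hz⟩⟩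

def lab : List P6 → P6 → P6 → ℕ
  | _, o, a | _, o, x => 1
  | _, _, _ => 0

def allChains : List (List P6) :=
  [[], [o], [a], [a'], [x], [b], [t],
   [o, a], [o, a'], [o, x], [a, b], [a', b], [x, t], [b, t],
   [o, a, b], [o, a', b], [o, x, t], [a, b, t], [a', b, t],
   [o, a, b, t], [o, a', b, t]]

theorem mem_allChains : ∀ {c : List P6}, c.IsChain (· ⋖ ·) → c ∈ allChains
  | [], _ => by decide
  | u :: s, hc => by
    have hext : ∀ u : P6, ∀ s ∈ allChains, (∀ w ∈ s.head?, u ⋖ w) → u :: s ∈ allChains := by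
      decide
    exact hext u s (mem_allChains hc.tail) (List.isChain_cons.1 hc).1

theorem forall_satChain_iff {u v : P6} {p : List P6 → Prop} :
    (∀ c, SatChain u v c → p c) ↔ ∀ c ∈ allChains, SatChain u v c → p c :=
  ⟨fun h c _ => h c, fun h c hc => h c (mem_allChains hc.1) hc⟩

instance (r : List P6) (u v w : P6) : Decidable (TopAscent lab r u v w) :=
  decidable_of_iff (u ⋖ v ∧ v ⋖ w ∧ ∀ c ∈ allChains, SatChain u w c → c ≠ [u, v, w] →
      labelSeq lab r [u, v, w] < labelSeq lab r c)
    (by rw [TopAscent, ← forall_satChain_iff]; rfl)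

theorem isTopolCLLabeling_lab : IsTopolCLLabeling lab := by
  have h : ∀ u v : P6, ∀ r ∈ allChains, SatChain ⊥ u r → u ≤ v →
      ∃ c ∈ allChains, SatChain u v c ∧
        (∀ c' ∈ allChains, SatChain u v c' → c' ≠ c → labelSeq lab r c < labelSeq lab r c') ∧
        ∀ c' ∈ allChains, SatChain u v c' → c' ≠ c → ¬ TopAscending lab r c' := by
    decide
  intro u v r hr huv
  obtain ⟨c, -, hc, hlt, hasc⟩ := h u v r (mem_allChains hr.1) hr huv
  exact ⟨c, hc, forall_satChain_iff.2 hlt, forall_satChain_iff.2 hasc⟩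

theorem not_isCCLabeling_lab : ¬ IsCCLabeling lab := fun hCC =>
  ((hCC ⊥ ⊤ [⊥] (SatChain.singleton_s14 ⊥) le_top).2 [o, x, t] [o, a, b, t]
    (by decide) (by decide) (by decide)).2 (by decide)

end P6

/-- Every CC-labeling of a finite bounded poset is a topological CL-labeling, but
there exists a finite bounded poset with a topological CL-labeling that is not a
CC-labeling. -/
theorem stmt_14 :
    (∀ (α : Type) [PartialOrder α] [BoundedOrder α] [Fintype α]
       (Q : Type) [LinearOrder Q] (lab : List α → α → α → Q),
       IsCCLabeling lab → IsTopolCLLabeling lab) ∧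
    (∃ (α : Type) (_ : PartialOrder α) (_ : BoundedOrder α) (_ : Fintype α)
       (Q : Type) (_ : LinearOrder Q) (lab : List α → α → α → Q),
       IsTopolCLLabeling lab ∧ ¬ IsCCLabeling lab) :=
  ⟨fun _ _ _ _ _ _ _ hCC => hCC.isTopolCLLabeling,
    ⟨P6, inferInstance, inferInstance, inferInstance, ℕ, inferInstance, P6.lab,
      P6.isTopolCLLabeling_lab, P6.not_isCCLabeling_lab⟩⟩
end
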